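/- arXiv:2305.06570 — 2 statements merged into one kernel-verified Lean document; each statement's English description precedes it below -/
import Mathlib

section
/- Let X be an infinite sequence over a finite alphabet Σ with |Σ| ≥ 2, let d ≥ 1, j ∈ {0,…,d−1}, and let ε > 0. If dim_FS(X) ≥ (d−1)/d + ε, then dim_FS(A_{d,j}) ≥ dim_FS^{{A_{d,k} : k ≠ j}}(A_{d,j}) ≥ d·ε. -/
open Filter

/-- A finite-state gambler over alphabet `α` with state space `Fin (m+1)`. -/
structure FSG (α : Type) [Fintype α] (m : ℕ) where
  δ : Fin (m + 1) → α → Fin (m + 1)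
  bet : Fin (m + 1) → α → ℚ
  bet_nonneg : ∀ q a, 0 ≤ bet q a
  bet_sum : ∀ q, ∑ a, bet q a = 1
  q₀ : Fin (m + 1)

namespace FSG

variable {α : Type} [Fintype α] {m : ℕ}

/-- The state reached after reading the first `n` symbols of `X`. -/
def state (G : FSG α m) (X : ℕ → α) : ℕ → Fin (m + 1)
  | 0 => G.q₀
  | n + 1 => G.δ (G.state X n) (X n)

/-- The value of the `s`-gale of `G` on the prefix `X[:n]`. -/
noncomputable def capital (G : FSG α m) (s : ℝ) (X : ℕ → α) : ℕ → ℝ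
  | 0 => 1
  | n + 1 => (Fintype.card α : ℝ) ^ s * (G.bet (G.state X n) (X n) : ℝ) * G.capital s X n

/-- The `s`-gale of `G` succeeds on `X` : `limsup_n d(X[:n]) = ∞`. -/
def Succeeds (G : FSG α m) (s : ℝ) (X : ℕ → α) : Prop :=
  ∀ C : ℝ, ∃ n, C < G.capital s X n

/-- The `s`-gale of `G` strongly succeeds on `X` : `liminf_n d(X[:n]) = ∞`. -/
def StrSucceeds (G : FSG α m) (s : ℝ) (X : ℕ → α) : Prop :=
  Tendsto (G.capital s X) atTop atTop

end FSG

/-- Finite-state dimension of a sequence. -/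
noncomputable def dimFS {α : Type} [Fintype α] (X : ℕ → α) : ℝ :=
  sInf {s : ℝ | 0 ≤ s ∧ ∃ (m : ℕ) (G : FSG α m), G.Succeeds s X}

/-- Finite-state strong dimension of a sequence. -/
noncomputable def DimFS {α : Type} [Fintype α] (X : ℕ → α) : ℝ :=
  sInf {s : ℝ | 0 ≤ s ∧ ∃ (m : ℕ) (G : FSG α m), G.StrSucceeds s X}

/-- A finite-state relative gambler over input alphabet `α`, oracle alphabet `β`,
oracle window length `ℓ`, with state space `Fin (m+1)`. -/
structure FSRG (α β : Type) [Fintype α] [Fintype β] (ℓ m : ℕ) where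
  δ : Fin (m + 1) → (Fin ℓ → β) → α → Fin (m + 1)
  bet : Fin (m + 1) → (Fin ℓ → β) → α → ℚ
  bet_nonneg : ∀ q y a, 0 ≤ bet q y a
  bet_sum : ∀ q y, ∑ a, bet q y a = 1
  q₀ : Fin (m + 1)

namespace FSRG

variable {α β : Type} [Fintype α] [Fintype β] {ℓ m : ℕ}

/-- The state reached after reading the first `n` symbols of `X`, with oracle `Y`
(the oracle window at step `i` being `Y[i:i+ℓ]`). -/
def state (G : FSRG α β ℓ m) (Y : ℕ → β) (X : ℕ → α) : ℕ → Fin (m + 1)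
  | 0 => G.q₀
  | n + 1 => G.δ (G.state Y X n) (fun j => Y (n + j.val)) (X n)

/-- The value of the `s`-gale of `G` with oracle `Y` on the prefix `X[:n]`. -/
noncomputable def capital (G : FSRG α β ℓ m) (s : ℝ) (Y : ℕ → β) (X : ℕ → α) : ℕ → ℝ
  | 0 => 1
  | n + 1 =>
      (Fintype.card α : ℝ) ^ s * (G.bet (G.state Y X n) (fun j => Y (n + j.val)) (X n) : ℝ) *
        G.capital s Y X n

/-- Success: `limsup_n d(X[:n]) = ∞`. -/
def Succeeds (G : FSRG α β ℓ m) (s : ℝ) (Y : ℕ → β) (X : ℕ → α) : Prop :=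
  ∀ C : ℝ, ∃ n, C < G.capital s Y X n

/-- Strong success: `liminf_n d(X[:n]) = ∞`. -/
def StrSucceeds (G : FSRG α β ℓ m) (s : ℝ) (Y : ℕ → β) (X : ℕ → α) : Prop :=
  Tendsto (G.capital s Y X) atTop atTop

end FSRG

/-- Finite-state relative dimension `dim_FS^Y(X)`. -/
noncomputable def dimFSRel {α β : Type} [Fintype α] [Fintype β] (X : ℕ → α) (Y : ℕ → β) : ℝ :=
  sInf {s : ℝ | 0 ≤ s ∧ ∃ (ℓ m : ℕ) (G : FSRG α β ℓ m), G.Succeeds s Y X}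

/-- Finite-state relative strong dimension `Dim_FS^Y(X)`. -/
noncomputable def DimFSRel {α β : Type} [Fintype α] [Fintype β] (X : ℕ → α) (Y : ℕ → β) : ℝ :=
  sInf {s : ℝ | 0 ≤ s ∧ ∃ (ℓ m : ℕ) (G : FSRG α β ℓ m), G.StrSucceeds s Y X}

open Classical in
/-- `N(u,x;v,y)`: the number of indices `i < k` such that the `i`-th disjoint block of
length `ℓ` of `X` equals `u` and that of `Y` equals `v`. -/
noncomputable def blockCount {α β : Type} (X : ℕ → α) (Y : ℕ → β) (ℓ k : ℕ)
    (u : Fin ℓ → α) (v : Fin ℓ → β) : ℕ :=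
  ((Finset.range k).filter fun i =>
    (∀ j : Fin ℓ, X (i * ℓ + j.val) = u j) ∧ ∀ j : Fin ℓ, Y (i * ℓ + j.val) = v j).card

/-- The `ℓ`-length conditional block entropy `H_ℓ(X[:kℓ] | Y[:kℓ])`.  (Terms with
`N(u,x;v,y) = 0` vanish since `0 · log 0 = 0` under Mathlib's convention `log 0 = 0`.) -/
noncomputable def condBlockEntropy {α β : Type} [Fintype α] [Fintype β]
    (X : ℕ → α) (Y : ℕ → β) (ℓ k : ℕ) : ℝ :=
  -(1 / (ℓ * Real.log (Fintype.card α))) *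
    ∑ v : Fin ℓ → β, ∑ u : Fin ℓ → α,
      ((blockCount X Y ℓ k u v : ℝ) / k) *
        Real.log ((blockCount X Y ℓ k u v : ℝ) /
          ∑ u' : Fin ℓ → α, (blockCount X Y ℓ k u' v : ℝ))

/-- `H_ℓ(X|Y) = liminf_{k → ∞} H_ℓ(X[:kℓ] | Y[:kℓ])`. -/
noncomputable def relBlockEntropyAt {α β : Type} [Fintype α] [Fintype β]
    (X : ℕ → α) (Y : ℕ → β) (ℓ : ℕ) : ℝ :=
  liminf (fun k => condBlockEntropy X Y ℓ k) atTop

/-- `H(X|Y) = inf_{ℓ ≥ 1} H_ℓ(X|Y)`. -/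
noncomputable def relBlockEntropy {α β : Type} [Fintype α] [Fintype β]
    (X : ℕ → α) (Y : ℕ → β) : ℝ :=
  ⨅ ℓ : ℕ, relBlockEntropyAt X Y (ℓ + 1)

/-- `H̄_ℓ(X|Y) = limsup_{k → ∞} H_ℓ(X[:kℓ] | Y[:kℓ])`. -/
noncomputable def relUpperBlockEntropyAt {α β : Type} [Fintype α] [Fintype β]
    (X : ℕ → α) (Y : ℕ → β) (ℓ : ℕ) : ℝ :=
  limsup (fun k => condBlockEntropy X Y ℓ k) atTop

/-- `H̄(X|Y) = inf_{ℓ ≥ 1} H̄_ℓ(X|Y)`. -/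
noncomputable def relUpperBlockEntropy {α β : Type} [Fintype α] [Fintype β]
    (X : ℕ → α) (Y : ℕ → β) : ℝ :=
  ⨅ ℓ : ℕ, relUpperBlockEntropyAt X Y (ℓ + 1)

/-- The arithmetic-progression subsequence `A_{d,a}(X) = X[a] X[a+d] X[a+2d] …`. -/
def AP {α : Type} (X : ℕ → α) (d a : ℕ) : ℕ → α := fun n => X (a + n * d)

/-- The product sequence of a family of sequences: its `n`-th symbol is the tuple
of the `n`-th symbols. -/
def prodSeq {α ι : Type} (Ys : ι → ℕ → α) : ℕ → ι → α := fun n i => Ys i n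

/-- Relative dimension with a finite family of oracle sequences, via the product sequence. -/
noncomputable def dimFSRelFam {α ι : Type} [Fintype α] [Fintype ι] [DecidableEq ι]
    (X : ℕ → α) (Ys : ι → ℕ → α) : ℝ :=
  dimFSRel X (prodSeq Ys)

/-- Relative strong dimension with a finite family of oracle sequences. -/
noncomputable def DimFSRelFam {α ι : Type} [Fintype α] [Fintype ι] [DecidableEq ι]
    (X : ℕ → α) (Ys : ι → ℕ → α) : ℝ :=
  DimFSRel X (prodSeq Ys)

/-- The interleaving `Y₀ ⊕ ⋯ ⊕ Y_{n-1}`: the `i`-th symbol is `Y_{i mod n}[⌊i/n⌋]`. -/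
def interleave {α : Type} {n : ℕ} (hn : 0 < n) (Ys : Fin n → ℕ → α) : ℕ → α :=
  fun i => Ys ⟨i % n, Nat.mod_lt i hn⟩ (i / n)

/-- The interleaving `A ⊕ B` of two sequences. -/
def interleave2 {α : Type} (A B : ℕ → α) : ℕ → α :=
  fun i => if i % 2 = 0 then A (i / 2) else B (i / 2)

/-!
Let `G` be a relative gambler, with oracle window `ℓ`, whose `s`-gale succeeds on `A_{d,j}` with
the other progressions as oracle. A plain gambler reading `X` cannot see the oracle symbols `G`
looks ahead to, so it averages over them: let `T(n)` be the sum, over all fillings `z` of a window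
of `bufLen d ℓ` positions starting at the block of `n`, of the capital of `G` on the sequence that
is `X` before `n` and `z` on the window. Guessing the symbol at `n` splits `T(n)` into weights
`W(n, a)` with `T(n + 1) = W(n, X n)`, and `∑ₐ W(n, a)` is `|Σ|^s T(n)` at positions of `A_{d,j}`
(one bet of `G`) and `|Σ| T(n)` elsewhere (one more free window symbol). Betting
`W(n, a) / ∑ W(n, ·)` is therefore a `t`-gale, `t = ((d - 1) + s) / d`, whose capital along
`A_{d,j}` is a constant multiple of `T(n)`, and `T(n)` dominates the capital of `G`. These bets are
finite-state: up to a factor independent of `a`, `W(n, a)` depends only on the state of `G`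
`ℓ - 1` blocks back, the last `bufLen d ℓ` symbols, `n mod d` and the number of pending blocks.
Hence `dim_FS(X) ≤ ((d - 1) + s) / d`, that is `s ≥ d ε`. The other inequality holds because a
gambler is a relative gambler that ignores its oracle.
-/

open Finset Function

namespace FSG

variable {α : Type} [Fintype α] {m : ℕ}

def uniform (hα : 0 < Fintype.card α) : FSG α 0 where
  δ _ _ := 0
  bet _ _ := (Fintype.card α : ℚ)⁻¹
  bet_nonneg _ _ := by positivity
  bet_sum _ := by
    rw [sum_const, card_univ, nsmul_eq_mul]
    exact mul_inv_cancel₀ (by exact_mod_cast hα.ne')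
  q₀ := 0

lemma uniform_capital_two (hα : 0 < Fintype.card α) (X : ℕ → α) (n : ℕ) :
    (uniform hα).capital 2 X n = (Fintype.card α : ℝ) ^ n := by
  induction n with
  | zero => rfl
  | succ n ih =>
    have hκ : (Fintype.card α : ℝ) ≠ 0 := by exact_mod_cast hα.ne'
    rw [capital, ih]
    simp only [uniform, Rat.cast_inv, Rat.cast_natCast, Real.rpow_two]
    field_simp
    ring

lemma exists_succeeds_two (hα : 2 ≤ Fintype.card α) (X : ℕ → α) :
    ∃ (m : ℕ) (G : FSG α m), G.Succeeds 2 X := by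
  have hpos : 0 < Fintype.card α := by omega
  have hκ : (1 : ℝ) < Fintype.card α := by exact_mod_cast hα
  refine ⟨0, uniform hpos, fun C => ?_⟩
  obtain ⟨n, hn⟩ := ((tendsto_pow_atTop_atTop_of_one_lt hκ).eventually_gt_atTop C).exists
  exact ⟨n, by rwa [uniform_capital_two]⟩

def toFSRG (G : FSG α m) (β : Type) [Fintype β] : FSRG α β 0 m where
  δ q _ a := G.δ q a
  bet q _ a := G.bet q a
  bet_nonneg q _ a := G.bet_nonneg q a
  bet_sum q _ := G.bet_sum q
  q₀ := G.q₀

lemma toFSRG_capital {β : Type} [Fintype β] (G : FSG α m) (s : ℝ) (Y : ℕ → β) (X : ℕ → α)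
    (n : ℕ) : (G.toFSRG β).capital s Y X n = G.capital s X n := by
  have hstate : ∀ n, (G.toFSRG β).state Y X n = G.state X n := by
    intro n
    induction n with
    | zero => rfl
    | succ n ih => simp only [FSRG.state, FSG.state, ih]; rfl
  induction n with
  | zero => rfl
  | succ n ih => simp only [FSRG.capital, FSG.capital, ih, hstate]; rfl

lemma Succeeds.toFSRG {β : Type} [Fintype β] {G : FSG α m} {s : ℝ} {X : ℕ → α}
    (h : G.Succeeds s X) (Y : ℕ → β) : (G.toFSRG β).Succeeds s Y X := by
  intro C
  simpa only [toFSRG_capital] using h C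

section OfFintype

variable {σ : Type} [Fintype σ] (δ : σ → α → σ) (bet : σ → α → ℚ)
  (bet_nonneg : ∀ q a, 0 ≤ bet q a) (bet_sum : ∀ q, ∑ a, bet q a = 1) (q₀ : σ)

noncomputable def equivFinOf (q₀ : σ) : σ ≃ Fin (Fintype.card σ - 1 + 1) :=
  (Fintype.equivFin σ).trans
    (finCongr (Nat.succ_pred_eq_of_pos (Fintype.card_pos_iff.mpr ⟨q₀⟩)).symm)

noncomputable def ofFintype : FSG α (Fintype.card σ - 1) where
  δ q a := equivFinOf q₀ (δ ((equivFinOf q₀).symm q) a)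
  bet q a := bet ((equivFinOf q₀).symm q) a
  bet_nonneg _ a := bet_nonneg _ a
  bet_sum _ := bet_sum _
  q₀ := equivFinOf q₀ q₀

lemma ofFintype_capital_succ (s : ℝ) (X : ℕ → α) (run : ℕ → σ) (h₀ : run 0 = q₀)
    (hrun : ∀ n, run (n + 1) = δ (run n) (X n)) (n : ℕ) :
    (ofFintype δ bet bet_nonneg bet_sum q₀).capital s X (n + 1) =
      (Fintype.card α : ℝ) ^ s * bet (run n) (X n) *
        (ofFintype δ bet bet_nonneg bet_sum q₀).capital s X n := by
  set G := ofFintype δ bet bet_nonneg bet_sum q₀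
  have hstate : ∀ n, G.state X n = equivFinOf q₀ (run n) := by
    intro n
    induction n with
    | zero => rw [h₀]; rfl
    | succ n ih =>
      rw [hrun, FSG.state, ih]
      simp only [G, ofFintype, Equiv.symm_apply_apply]
  rw [capital, hstate]
  simp only [G, ofFintype, Equiv.symm_apply_apply]

end OfFintype

end FSG

namespace FSRG

variable {α β : Type} [Fintype α] [Fintype β] {ℓ m : ℕ}

lemma capital_nonneg (G : FSRG α β ℓ m) (s : ℝ) (Y : ℕ → β) (X : ℕ → α) (n : ℕ) :
    0 ≤ G.capital s Y X n := by
  induction n with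
  | zero => exact zero_le_one
  | succ n ih =>
    have hbet : (0 : ℝ) ≤ G.bet (G.state Y X n) (fun i => Y (n + i.val)) (X n) := by
      exact_mod_cast G.bet_nonneg _ _ _
    exact mul_nonneg (mul_nonneg (Real.rpow_nonneg (Nat.cast_nonneg _) s) hbet) ih

lemma state_congr (G : FSRG α β ℓ m) {Y₁ Y₂ : ℕ → β} {X₁ X₂ : ℕ → α} {k : ℕ}
    (hY : ∀ u, u + 1 < k + ℓ → Y₁ u = Y₂ u) (hX : ∀ u < k, X₁ u = X₂ u) :
    G.state Y₁ X₁ k = G.state Y₂ X₂ k := by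
  induction k with
  | zero => rfl
  | succ k ih =>
    rw [state, state, ih (fun u hu => hY u (by omega)) (fun u hu => hX u (by omega)),
      hX k (by omega)]
    congr 1
    funext i
    exact hY _ (by omega)

lemma capital_congr (G : FSRG α β ℓ m) (s : ℝ) {Y₁ Y₂ : ℕ → β} {X₁ X₂ : ℕ → α} {k : ℕ}
    (hY : ∀ u, u + 1 < k + ℓ → Y₁ u = Y₂ u) (hX : ∀ u < k, X₁ u = X₂ u) :
    G.capital s Y₁ X₁ k = G.capital s Y₂ X₂ k := by
  induction k with
  | zero => rfl
  | succ k ih =>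
    have hY' : ∀ u, u + 1 < k + ℓ → Y₁ u = Y₂ u := fun u hu => hY u (by omega)
    have hX' : ∀ u < k, X₁ u = X₂ u := fun u hu => hX u (by omega)
    have hwindow : (fun i : Fin ℓ => Y₁ (k + i.val)) = fun i => Y₂ (k + i.val) := by
      funext i
      exact hY _ (by omega)
    rw [capital, capital, ih hY' hX', G.state_congr hY' hX', hwindow, hX k (by omega)]

def runFrom (G : FSRG α β ℓ m) (q : Fin (m + 1)) (Y : ℕ → β) (X : ℕ → α) : ℕ → Fin (m + 1)
  | 0 => q
  | n + 1 => G.δ (G.runFrom q Y X n) (fun i => Y (n + i.val)) (X n)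

def betProduct (G : FSRG α β ℓ m) (q : Fin (m + 1)) (Y : ℕ → β) (X : ℕ → α) (k : ℕ) : ℚ :=
  ∏ n ∈ range k, G.bet (G.runFrom q Y X n) (fun i => Y (n + i.val)) (X n)

lemma betProduct_nonneg (G : FSRG α β ℓ m) (q : Fin (m + 1)) (Y : ℕ → β) (X : ℕ → α)
    (k : ℕ) : 0 ≤ G.betProduct q Y X k :=
  prod_nonneg fun _ _ => G.bet_nonneg _ _ _

lemma state_add (G : FSRG α β ℓ m) (Y : ℕ → β) (X : ℕ → α) (c k : ℕ) :
    G.state Y X (c + k) =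
      G.runFrom (G.state Y X c) (fun u => Y (c + u)) (fun u => X (c + u)) k := by
  induction k with
  | zero => rfl
  | succ k ih =>
    rw [← add_assoc, state, runFrom, ih]
    simp only [add_assoc]

lemma capital_add (G : FSRG α β ℓ m) (s : ℝ) (Y : ℕ → β) (X : ℕ → α) (c k : ℕ) :
    G.capital s Y X (c + k) = G.capital s Y X c * ((Fintype.card α : ℝ) ^ s) ^ k *
      G.betProduct (G.state Y X c) (fun u => Y (c + u)) (fun u => X (c + u)) k := by
  induction k with
  | zero => simp [betProduct]
  | succ k ih =>
    rw [← add_assoc, capital, ih, betProduct, betProduct, prod_range_succ, state_add]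
    simp only [add_assoc]
    push_cast
    ring

lemma runFrom_congr (G : FSRG α β ℓ m) (q : Fin (m + 1)) {Y₁ Y₂ : ℕ → β} {X₁ X₂ : ℕ → α}
    {k : ℕ} (hY : ∀ u, u + 1 < k + ℓ → Y₁ u = Y₂ u) (hX : ∀ u < k, X₁ u = X₂ u) :
    ∀ n ≤ k, G.runFrom q Y₁ X₁ n = G.runFrom q Y₂ X₂ n := by
  intro n hn
  induction n with
  | zero => rfl
  | succ n ih =>
    rw [runFrom, runFrom, ih (by omega), hX n (by omega)]
    congr 1
    funext i
    exact hY _ (by omega)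

lemma betProduct_congr (G : FSRG α β ℓ m) (q : Fin (m + 1)) {Y₁ Y₂ : ℕ → β}
    {X₁ X₂ : ℕ → α} {k : ℕ} (hY : ∀ u, u + 1 < k + ℓ → Y₁ u = Y₂ u)
    (hX : ∀ u < k, X₁ u = X₂ u) :
    G.betProduct q Y₁ X₁ k = G.betProduct q Y₂ X₂ k := by
  refine prod_congr rfl fun n hn => ?_
  rw [mem_range] at hn
  rw [G.runFrom_congr q hY hX n hn.le, hX n hn]
  congr 1
  funext i
  exact hY _ (by omega)

end FSRG

section Dimension

variable {α β : Type} [Fintype α] [Fintype β]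

lemma dimFS_le_of_succeeds {m : ℕ} {G : FSG α m} {s : ℝ} {X : ℕ → α} (hs : 0 ≤ s)
    (h : G.Succeeds s X) : dimFS X ≤ s :=
  csInf_le ⟨0, fun _ ht => ht.1⟩ ⟨hs, m, G, h⟩

lemma dimFSRel_le_dimFS (hα : 2 ≤ Fintype.card α) (X : ℕ → α) (Y : ℕ → β) :
    dimFSRel X Y ≤ dimFS X := by
  refine csInf_le_csInf ⟨0, fun _ ht => ht.1⟩ ⟨2, zero_le_two, FSG.exists_succeeds_two hα X⟩ ?_
  rintro s ⟨hs, m, G, hG⟩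
  exact ⟨hs, 0, m, G.toFSRG β, hG.toFSRG Y⟩

lemma le_dimFSRel (hα : 2 ≤ Fintype.card α) {X : ℕ → α} {Y : ℕ → β} {t : ℝ}
    (h : ∀ (s : ℝ) (ℓ m : ℕ) (G : FSRG α β ℓ m), 0 ≤ s → G.Succeeds s Y X → t ≤ s) :
    t ≤ dimFSRel X Y := by
  obtain ⟨m, G, hG⟩ := FSG.exists_succeeds_two hα X
  refine le_csInf ⟨2, zero_le_two, 0, m, G.toFSRG β, hG.toFSRG Y⟩ ?_
  rintro s ⟨hs, ℓ, m, G, hG⟩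
  exact h s ℓ m G hs hG

end Dimension

section FunctionSums

variable {α M : Type*} [Fintype α] [AddCommMonoid M]

lemma sum_comp_of_injective {ι κ : Type*} [Fintype ι] [DecidableEq ι] [Fintype κ] [DecidableEq κ]
    {e : ι → κ} (he : Injective e) (g : (ι → α) → M) :
    ∑ z : κ → α, g (z ∘ e) = (Fintype.card α ^ (Fintype.card κ - Fintype.card ι)) • ∑ w, g w := by
  classical
  let split := Equiv.piEquivPiSubtypeProd (· ∈ Set.range e) fun _ => α
  let restrict := Equiv.arrowCongr (Equiv.ofInjective e he) (Equiv.refl α)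
  have hcompl : Fintype.card ({k // k ∉ Set.range e} → α) =
      Fintype.card α ^ (Fintype.card κ - Fintype.card ι) := by
    rw [Fintype.card_fun, Fintype.card_subtype_compl, Set.card_range_of_injective he]
  calc ∑ z : κ → α, g (z ∘ e)
      = ∑ p : ({k // k ∈ Set.range e} → α) × ({k // k ∉ Set.range e} → α),
          g (restrict.symm p.1) := by
        rw [← split.symm.sum_comp]
        refine sum_congr rfl fun p _ => congrArg g (funext fun i => ?_)
        simp [split, restrict, Equiv.piEquivPiSubtypeProd_symm_apply]
    _ = (Fintype.card α ^ (Fintype.card κ - Fintype.card ι)) • ∑ w, g w := by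
        rw [Fintype.sum_prod_type, ← restrict.symm.sum_comp, smul_sum]
        simp only [sum_const, card_univ, hcompl]

lemma sum_sum_update {ι : Type*} [Fintype ι] [DecidableEq ι] (i : ι) (f : (ι → α) → M) :
    ∑ z : ι → α, ∑ a, f (update z i a) = Fintype.card α • ∑ z, f z := by
  let split := Equiv.funSplitAt i α
  have hupdate : ∀ z a, update z i a = split.symm (a, (split z).2) := by
    intro z a
    funext k
    by_cases hk : k = i
    · subst hk; simp [split, Equiv.funSplitAt_symm_apply]
    · simp [split, Equiv.funSplitAt_symm_apply, hk]
  simp only [hupdate]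
  rw [← split.symm.sum_comp, ← split.symm.sum_comp f, Fintype.sum_prod_type,
    Fintype.sum_prod_type]
  simp only [Equiv.apply_symm_apply, sum_const, card_univ, smul_sum]
  exact sum_comm

end FunctionSums

namespace APSimulation

section Arithmetic

variable {d j : ℕ}

lemma div_mod_succ (hd : 0 < d) (n : ℕ) :
    (n % d + 1 < d ∧ (n + 1) / d = n / d ∧ (n + 1) % d = n % d + 1) ∨
      (n % d + 1 = d ∧ (n + 1) / d = n / d + 1 ∧ (n + 1) % d = 0) := by
  have hdm := Nat.div_add_mod n d
  have hr := Nat.mod_lt n hd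
  by_cases h : n % d + 1 < d
  · exact Or.inl ⟨h, (Nat.div_mod_unique hd).mpr ⟨by omega, h⟩⟩
  · exact Or.inr ⟨by omega, (Nat.div_mod_unique hd).mpr ⟨by rw [Nat.mul_add]; omega, hd⟩⟩

/-- The number of positions `p < n` with `p % d = j`. -/
def apCount (d j n : ℕ) : ℕ := n / d + if j < n % d then 1 else 0

lemma apCount_zero (j : ℕ) : apCount d j 0 = 0 := by
  simp [apCount]

lemma apCount_succ (hj : j < d) (n : ℕ) :
    apCount d j (n + 1) = apCount d j n + if n % d = j then 1 else 0 := by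
  unfold apCount
  rcases div_mod_succ (Nat.zero_lt_of_lt hj) n with ⟨_, h₂, h₃⟩ | ⟨_, h₂, h₃⟩ <;> rw [h₂, h₃] <;>
    split_ifs <;> omega

lemma apCount_add_mul (hj : j < d) (k : ℕ) : apCount d j (j + k * d) = k := by
  rw [apCount, Nat.add_mul_div_right _ _ (Nat.zero_lt_of_lt hj), Nat.add_mul_mod_self_right,
    Nat.div_eq_of_lt hj, Nat.mod_eq_of_lt hj]
  simp

lemma apCount_of_mod_eq {n : ℕ} (h : n % d = j) : apCount d j n = n / d := by
  simp [apCount, h]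

lemma apCount_succ_le (hj : j < d) (n : ℕ) : apCount d j (n + 1) ≤ n / d + 1 := by
  rw [apCount_succ hj, apCount]
  split_ifs <;> omega

lemma add_mul_lt_of_lt_apCount (hj : j < d) {u n : ℕ} (hu : u < apCount d j n) : j + u * d < n := by
  have hdm := Nat.div_add_mod' n d
  rw [apCount] at hu
  rcases Nat.lt_or_ge u (n / d) with h | h
  · have : (u + 1) * d ≤ n / d * d := Nat.mul_le_mul_right d h
    rw [Nat.succ_mul] at this
    split_ifs at hu <;> omega
  · split_ifs at hu with hjr
    · obtain rfl : u = n / d := by omega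
      omega
    · omega

/-- The length of the look-ahead window: at least one block, and at least `ℓ` blocks. -/
def bufLen (d ℓ : ℕ) : ℕ := (ℓ - 1) * d + d

/-- The number of blocks read but not yet passed to the simulated gambler. -/
def pending (d ℓ n : ℕ) : ℕ := min (n / d) (ℓ - 1)

/-- The number of steps the simulated gambler has taken after `n` symbols of `X`. -/
def committed (d ℓ n : ℕ) : ℕ := n / d - pending d ℓ n

end Arithmetic

section Patch

variable {α : Type} {E b N : ℕ}

def patch (X : ℕ → α) (E b N : ℕ) (z : Fin E → α) : ℕ → α := fun p =>
  if p < N then X p else if h : p - b < E then z ⟨p - b, h⟩ else X p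

lemma patch_of_lt (X : ℕ → α) (z : Fin E → α) {p : ℕ} (h : p < N) :
    patch X E b N z p = X p :=
  if_pos h

lemma patch_self (X : ℕ → α) (hbN : b ≤ N) : patch X E b N (fun i => X (b + i)) = X := by
  funext p
  unfold patch
  split_ifs with h₁ h₂
  · rfl
  · show X (b + (p - b)) = X p
    congr 1
    omega
  · rfl

lemma patch_update_self (X : ℕ → α) {n : ℕ} (hE : n - b < E) (z : Fin E → α)
    (a : α) : patch X E b n (update z ⟨n - b, hE⟩ a) n = a := by
  rw [patch, if_neg (lt_irrefl n), dif_pos hE, update_self]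

lemma patch_update_of_ne (X : ℕ → α) {n : ℕ} (hb : b ≤ n) (hE : n - b < E) (z : Fin E → α)
    (a : α) {p : ℕ} (hp : p ≠ n) :
    patch X E b n (update z ⟨n - b, hE⟩ a) p = patch X E b n z p := by
  unfold patch
  split_ifs with h₁ h₂
  · rfl
  · exact update_of_ne (fun h => hp (by rw [Fin.mk.injEq] at h; omega)) _ _
  · rfl

lemma patch_succ (X : ℕ → α) {n : ℕ} (hb : b ≤ n) (hE : n - b < E) (z : Fin E → α) :
    patch X E b (n + 1) z = patch X E b n (update z ⟨n - b, hE⟩ (X n)) := by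
  funext p
  rcases lt_trichotomy p n with h | rfl | h
  · rw [patch_of_lt _ _ (by omega), patch_of_lt _ _ h]
  · rw [patch_of_lt _ _ (Nat.lt_succ_self p), patch_update_self X]
  · rw [patch_update_of_ne X hb hE z _ h.ne', patch, patch, if_neg (by omega), if_neg (by omega)]

lemma patch_shift (X : ℕ → α) (z : Fin E → α) {c : ℕ} (hcb : c ≤ b) (hbN : b ≤ N) (i : ℕ) :
    patch X E b N z (c + i) = patch (fun i => X (c + i)) E (b - c) (N - c) z i := by
  unfold patch
  split_ifs <;> first | rfl | omega | congr 1; ext; simp only; omega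

lemma patch_congr {X₁ X₂ : ℕ → α} (z : Fin E → α) (hbN : b ≤ N) (h : ∀ p < N, X₁ p = X₂ p) {p : ℕ}
    (hp : p < b + E) : patch X₁ E b N z p = patch X₂ E b N z p := by
  unfold patch
  split_ifs with h₁ h₂
  · exact h p h₁
  · rfl
  · omega

end Patch

section Oracle

variable {α : Type} {d : ℕ}

def oracle (j : Fin d) (Z : ℕ → α) : ℕ → {k : Fin d // k ≠ j} → α :=
  prodSeq fun k => AP Z d k.val

lemma oracle_congr {j : Fin d} {Z₁ Z₂ : ℕ → α} {B : ℕ}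
    (h : ∀ p < B * d, p % d ≠ j.val → Z₁ p = Z₂ p) {u : ℕ} (hu : u < B) :
    oracle j Z₁ u = oracle j Z₂ u := by
  funext k
  have hk := k.val.isLt
  have hle : (u + 1) * d ≤ B * d := Nat.mul_le_mul_right d hu
  refine h _ (by rw [Nat.succ_mul] at hle; omega) ?_
  rw [Nat.add_mul_mod_self_right, Nat.mod_eq_of_lt hk]
  exact fun hkj => k.2 (Fin.ext hkj)

end Oracle

/-- Averaging over the window removes the dependence on where the window starts, as long as
it covers everything `F` reads. -/
lemma sum_patch_eq_of_le {α M : Type} [Fintype α] [AddCommMonoid M] (X : ℕ → α)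
    (F : (ℕ → α) → M) {K N B b₁ b₂ : ℕ} (hb₁ : b₁ ≤ N) (hb₂ : b₂ ≤ N) (hB₁ : B ≤ b₁ + K)
    (hB₂ : B ≤ b₂ + K) (hF : ∀ g h : ℕ → α, (∀ p < B, g p = h p) → F g = F h) :
    ∑ z : Fin K → α, F (patch X K b₁ N z) = ∑ z : Fin K → α, F (patch X K b₂ N z) := by
  suffices key : ∀ b ≤ N, B ≤ b + K → ∑ z : Fin K → α, F (patch X K b N z) =
      (Fintype.card α ^ (K - (B - N))) • ∑ w : Fin (B - N) → α, F (patch X (B - N) N N w) by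
    rw [key b₁ hb₁ hB₁, key b₂ hb₂ hB₂]
  intro b hb hB
  let e : Fin (B - N) → Fin K := fun u => ⟨N - b + u.val, by omega⟩
  have he : Injective e := fun u v huv => Fin.ext (by simpa [e] using huv)
  have hpatch : ∀ z : Fin K → α, F (patch X K b N z) = F (patch X (B - N) N N (z ∘ e)) := by
    refine fun z => hF _ _ fun p hp => ?_
    by_cases hpN : p < N
    · rw [patch_of_lt _ _ hpN, patch_of_lt _ _ hpN]
    · simp only [patch, if_neg hpN, dif_pos (show p - b < K by omega),
        dif_pos (show p - N < B - N by omega), comp_apply, e]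
      congr 2
      omega
  simp only [hpatch]
  simpa using sum_comp_of_injective he (fun w => F (patch X (B - N) N N w))

section Extend

variable {α : Type} {d ℓ : ℕ} (X : ℕ → α)

lemma sub_div_mul_lt_bufLen (ℓ : ℕ) (hd : 0 < d) (n : ℕ) : n - n / d * d < bufLen d ℓ := by
  have := Nat.div_add_mod' n d
  have := Nat.mod_lt n hd
  rw [bufLen]
  omega

def extend (hd : 0 < d) (n : ℕ) (z : Fin (bufLen d ℓ) → α) (a : α) : ℕ → α :=
  patch X (bufLen d ℓ) (n / d * d) n (update z ⟨n - n / d * d, sub_div_mul_lt_bufLen ℓ hd n⟩ a)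

lemma extend_of_lt (hd : 0 < d) (n : ℕ) (z : Fin (bufLen d ℓ) → α) (a : α) {p : ℕ}
    (h : p < n) : extend X hd n z a p = X p :=
  patch_of_lt _ _ h

lemma extend_self (hd : 0 < d) (n : ℕ) (z : Fin (bufLen d ℓ) → α) (a : α) :
    extend X hd n z a n = a :=
  patch_update_self X _ z a

lemma patch_succ_eq_extend (hd : 0 < d) (n : ℕ) (z : Fin (bufLen d ℓ) → α) :
    patch X (bufLen d ℓ) (n / d * d) (n + 1) z = extend X hd n z (X n) :=
  patch_succ X (Nat.div_mul_le_self n d) _ z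

end Extend

section Average

variable {α : Type} [Fintype α] {d ℓ m : ℕ} {j : Fin d}
  (G : FSRG α ({k : Fin d // k ≠ j} → α) ℓ m) (X : ℕ → α) (s : ℝ)

noncomputable def avgCapitalFrom (b N : ℕ) : ℝ :=
  ∑ z : Fin (bufLen d ℓ) → α,
    G.capital s (oracle j (patch X (bufLen d ℓ) b N z)) (AP X d j.val) (apCount d j.val N)

noncomputable def avgCapital (n : ℕ) : ℝ :=
  avgCapitalFrom G X s (n / d * d) n

noncomputable def weight (n : ℕ) (a : α) : ℝ :=
  ∑ z : Fin (bufLen d ℓ) → α,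
    G.capital s (oracle j (extend X j.pos n z a)) (AP (extend X j.pos n z a) d j.val)
      (apCount d j.val (n + 1))

lemma avgCapital_zero : avgCapital G X s 0 = (Fintype.card α : ℝ) ^ bufLen d ℓ := by
  simp [avgCapital, avgCapitalFrom, apCount_zero, FSRG.capital]

lemma capital_le_avgCapital (n : ℕ) :
    G.capital s (oracle j X) (AP X d j.val) (apCount d j.val n) ≤ avgCapital G X s n := by
  have hX := patch_self X (E := bufLen d ℓ) (Nat.div_mul_le_self n d)
  have := single_le_sum (f := fun z => G.capital s (oracle j (patch X (bufLen d ℓ) (n / d * d) n z))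
      (AP X d j.val) (apCount d j.val n)) (fun z _ => G.capital_nonneg _ _ _ _)
    (mem_univ fun i : Fin (bufLen d ℓ) => X (n / d * d + i))
  rwa [hX] at this

end Average

section ExtendOracle

variable {α : Type} {d ℓ : ℕ} {j : Fin d} (X : ℕ → α)

lemma AP_extend_of_lt_apCount (n : ℕ) (z : Fin (bufLen d ℓ) → α) (a : α) {u : ℕ}
    (hu : u < apCount d j.val n) : AP (extend X j.pos n z a) d j.val u = AP X d j.val u :=
  extend_of_lt X j.pos n z a (add_mul_lt_of_lt_apCount j.isLt hu)

lemma oracle_extend_of_mod_eq {n : ℕ} (hn : n % d = j.val) (z : Fin (bufLen d ℓ) → α)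
    (a : α) :
    oracle j (extend X j.pos n z a) = oracle j (patch X (bufLen d ℓ) (n / d * d) n z) := by
  funext u k
  refine patch_update_of_ne X (Nat.div_mul_le_self n d) _ z a fun h => k.2 (Fin.ext ?_)
  have := congrArg (· % d) h
  simpa only [Nat.add_mul_mod_self_right, Nat.mod_eq_of_lt k.val.isLt, hn] using this

end ExtendOracle

section Recurrence

variable {α : Type} [Fintype α] {d ℓ m : ℕ} {j : Fin d}
  (G : FSRG α ({k : Fin d // k ≠ j} → α) ℓ m) (X : ℕ → α) (s : ℝ)

lemma capital_oracle_congr (N : ℕ) {g h : ℕ → α}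
    (hgh : ∀ p < (apCount d j.val N + (ℓ - 1)) * d, g p = h p) :
    G.capital s (oracle j g) (AP X d j.val) (apCount d j.val N) =
      G.capital s (oracle j h) (AP X d j.val) (apCount d j.val N) :=
  G.capital_congr s (fun _ hu => oracle_congr (fun p hp _ => hgh p hp) (by omega))
    fun _ _ => rfl

lemma avgCapitalFrom_succ (n : ℕ) :
    avgCapitalFrom G X s (n / d * d) (n + 1) = avgCapital G X s (n + 1) := by
  have hdm' := Nat.div_mul_le_self (n + 1) d
  have hdiv : n / d * d ≤ (n + 1) / d * d :=
    Nat.mul_le_mul_right d (Nat.div_le_div_right (Nat.le_succ n))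
  have hcount : (apCount d j.val (n + 1) + (ℓ - 1)) * d ≤ n / d * d + bufLen d ℓ := by
    have := Nat.mul_le_mul_right d (Nat.add_le_add_right (apCount_succ_le j.isLt n) (ℓ - 1))
    rw [bufLen]
    linarith [show (n / d + 1 + (ℓ - 1)) * d = n / d * d + (ℓ - 1) * d + d by ring]
  exact sum_patch_eq_of_le X _ (Nat.le_succ_of_le (Nat.div_mul_le_self n d)) hdm'
    hcount (hcount.trans (by omega)) fun g h hgh => capital_oracle_congr G X s _ hgh

lemma avgCapitalFrom_succ_eq_weight (n : ℕ) :
    avgCapitalFrom G X s (n / d * d) (n + 1) = weight G X s n (X n) := by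
  refine sum_congr rfl fun z _ => ?_
  rw [patch_succ_eq_extend X j.pos]
  refine G.capital_congr s (fun _ _ => rfl) fun u hu => ?_
  rcases (Nat.lt_succ_iff.mp (add_mul_lt_of_lt_apCount j.isLt hu)).lt_or_eq with h | h
  · exact (extend_of_lt X j.pos n z (X n) h).symm
  · show X (j.val + u * d) = extend X j.pos n z (X n) (j.val + u * d)
    rw [h, extend_self]

lemma avgCapital_succ (n : ℕ) : avgCapital G X s (n + 1) = weight G X s n (X n) := by
  rw [← avgCapitalFrom_succ, avgCapitalFrom_succ_eq_weight]

lemma sum_weight_of_mod_eq {n : ℕ} (hn : n % d = j.val) :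
    ∑ a, weight G X s n a = (Fintype.card α : ℝ) ^ s * avgCapital G X s n := by
  unfold weight
  rw [sum_comm, avgCapital, avgCapitalFrom, mul_sum]
  refine sum_congr rfl fun z _ => ?_
  set Z := patch X (bufLen d ℓ) (n / d * d) n z
  have hAP (a) : ∀ u < apCount d j.val n, AP (extend X j.pos n z a) d j.val u = AP X d j.val u :=
    fun u hu => AP_extend_of_lt_apCount X n z a hu
  have hlast (a) : AP (extend X j.pos n z a) d j.val (apCount d j.val n) = a := by
    rw [AP, apCount_of_mod_eq hn, ← hn, Nat.mod_add_div', extend_self]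
  have hstep (a) : G.capital s (oracle j (extend X j.pos n z a)) (AP (extend X j.pos n z a) d j.val)
      (apCount d j.val (n + 1)) = (Fintype.card α : ℝ) ^ s *
        G.bet (G.state (oracle j Z) (AP X d j.val) (apCount d j.val n))
          (fun i => oracle j Z (apCount d j.val n + i.val)) a *
        G.capital s (oracle j Z) (AP X d j.val) (apCount d j.val n) := by
    rw [apCount_succ j.isLt, if_pos hn, FSRG.capital, oracle_extend_of_mod_eq X hn, hlast,
      G.capital_congr s (fun _ _ => rfl) (hAP a), G.state_congr (fun _ _ => rfl) (hAP a)]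
  have hbet := G.bet_sum (G.state (oracle j Z) (AP X d j.val) (apCount d j.val n))
    (fun i => oracle j Z (apCount d j.val n + i.val))
  simp only [hstep, ← sum_mul, ← mul_sum]
  rw [← Rat.cast_sum, hbet, Rat.cast_one, mul_one]

lemma sum_weight_of_mod_ne {n : ℕ} (hn : n % d ≠ j.val) :
    ∑ a, weight G X s n a = Fintype.card α * avgCapital G X s n := by
  have hcount : apCount d j.val (n + 1) = apCount d j.val n := by
    rw [apCount_succ j.isLt, if_neg hn, add_zero]
  unfold weight
  rw [sum_comm, ← nsmul_eq_mul, avgCapital, avgCapitalFrom,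
    ← sum_sum_update ⟨n - n / d * d, sub_div_mul_lt_bufLen ℓ j.pos n⟩]
  refine sum_congr rfl fun z _ => sum_congr rfl fun a _ => ?_
  rw [hcount]
  exact G.capital_congr s (fun _ _ => rfl) fun u hu => AP_extend_of_lt_apCount X n z a hu

lemma sum_weight (n : ℕ) : ∑ a, weight G X s n a =
    (Fintype.card α : ℝ) ^ (if n % d = j.val then s else 1) * avgCapital G X s n := by
  split_ifs with hn
  · exact sum_weight_of_mod_eq G X s hn
  · rw [Real.rpow_one]
    exact sum_weight_of_mod_ne G X s hn

end Recurrence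

section Buffer

variable {α : Type} {E : ℕ}

/-- The last `E` symbols of `X[:n]`; when `n < E` the missing ones read as `X 0`. -/
def lastSymbols (X : ℕ → α) (E n : ℕ) : Fin E → α := fun t => X (n + t - E)

def shiftIn (buf : Fin E → α) (a : α) : Fin E → α := fun t =>
  if h : t.val + 1 < E then buf ⟨t + 1, h⟩ else a

lemma shiftIn_lastSymbols (X : ℕ → α) (n : ℕ) :
    shiftIn (lastSymbols X E n) (X n) = lastSymbols X E (n + 1) := by
  funext t
  have := t.isLt
  unfold shiftIn lastSymbols
  split_ifs <;> congr 1 <;> (try dsimp only) <;> omega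

lemma lastSymbols_apply (X : ℕ → α) {n : ℕ} (h : E ≤ n) (t : Fin E) :
    lastSymbols X E n t = X (n - E + t) := by
  unfold lastSymbols
  congr 1
  omega

/-- The buffer as a sequence whose last buffered position is `N - 1`; the value `a` beyond the
buffer is never read. -/
def bufferSeq (buf : Fin E → α) (N : ℕ) (a : α) : ℕ → α := fun i =>
  if h : i + E - N < E then buf ⟨i + E - N, h⟩ else a

lemma bufferSeq_lastSymbols (X : ℕ → α) {n N : ℕ} (hN : N ≤ E) (hNn : N ≤ n) (a : α) {i : ℕ}
    (hi : i < N) : bufferSeq (lastSymbols X E n) N a i = X (n - N + i) := by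
  rw [bufferSeq, dif_pos (by omega), lastSymbols]
  congr 1
  dsimp only
  omega

end Buffer

section LocalView

variable {α : Type} {d ℓ : ℕ} {j : Fin d}

lemma pending_le (n : ℕ) : pending d ℓ n ≤ ℓ - 1 := Nat.min_le_right _ _

lemma committed_add_pending (n : ℕ) : committed d ℓ n + pending d ℓ n = n / d :=
  Nat.sub_add_cancel (Nat.min_le_left _ _)

lemma committed_eq_zero_or (n : ℕ) :
    committed d ℓ n = 0 ∨ committed d ℓ n + (ℓ - 1) = n / d := by
  unfold committed pending
  omega

/-- What the simulation knows, in positions counted from the block of its committed step: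
the buffer, the guess `a` at `p * d + r`, and the filling `z` of the window beyond it. -/
def localView (buf : Fin (bufLen d ℓ) → α) (r : Fin d) (p : ℕ) (z : Fin (bufLen d ℓ) → α)
    (a : α) : ℕ → α :=
  patch (bufferSeq buf (p * d + r) a) (bufLen d ℓ) (p * d) (p * d + r)
    (update z (Fin.castLE (Nat.le_add_left d _) r) a)

lemma extend_eq_localView (X : ℕ → α) (n : ℕ) (z : Fin (bufLen d ℓ) → α) (a : α) {i : ℕ}
    (hi : i < pending d ℓ n * d + bufLen d ℓ) :
    extend X j.pos n z a (committed d ℓ n * d + i) =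
      localView (lastSymbols X (bufLen d ℓ) n) ⟨n % d, Nat.mod_lt n j.pos⟩ (pending d ℓ n)
        z a i := by
  have hdm := Nat.div_add_mod' n d
  have hsum : committed d ℓ n * d + pending d ℓ n * d = n / d * d := by
    rw [← Nat.add_mul, committed_add_pending]
  have hp : pending d ℓ n * d ≤ (ℓ - 1) * d := Nat.mul_le_mul_right d (pending_le n)
  have hr := Nat.mod_lt n j.pos
  have hidx : (⟨n - n / d * d, sub_div_mul_lt_bufLen ℓ j.pos n⟩ : Fin (bufLen d ℓ)) =
      Fin.castLE (Nat.le_add_left d _) ⟨n % d, hr⟩ := Fin.ext (by simp only [Fin.val_castLE]; omega)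
  rw [extend, patch_shift _ _ (by omega) (Nat.div_mul_le_self n d), localView, hidx,
    show n / d * d - committed d ℓ n * d = pending d ℓ n * d by omega,
    show n - committed d ℓ n * d = pending d ℓ n * d + n % d by omega]
  refine patch_congr _ (Nat.le_add_right _ _) (fun p hp' => ?_) hi
  rw [bufferSeq_lastSymbols X (by rw [bufLen]; omega) (by omega) a hp']
  congr 1
  omega

end LocalView

section Factorization

variable {α : Type} [Fintype α] {d ℓ m : ℕ} {j : Fin d}
  (G : FSRG α ({k : Fin d // k ≠ j} → α) ℓ m) (X : ℕ → α) (s : ℝ)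

/-- The number of steps of `G` still to be taken at phase `r` of a block with `p` blocks
pending. -/
def pendingBets (j r p : ℕ) : ℕ := p + if j ≤ r then 1 else 0

lemma apCount_succ_eq_committed_add (n : ℕ) :
    apCount d j.val (n + 1) = committed d ℓ n + pendingBets j.val (n % d) (pending d ℓ n) := by
  have := committed_add_pending (d := d) (ℓ := ℓ) n
  rw [apCount_succ j.isLt, apCount, pendingBets]
  split_ifs <;> omega

lemma pendingBets_le (n : ℕ) : pendingBets j.val (n % d) (pending d ℓ n) ≤ pending d ℓ n + 1 := by
  unfold pendingBets
  split_ifs <;> omega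

def machineWeight (q : Fin (m + 1)) (buf : Fin (bufLen d ℓ) → α) (r : Fin d) (p : ℕ)
    (a : α) : ℚ :=
  ∑ z : Fin (bufLen d ℓ) → α, G.betProduct q (oracle j (localView buf r p z a))
    (AP (localView buf r p z a) d j.val) (pendingBets j.val r p)

lemma machineWeight_nonneg (q : Fin (m + 1)) (buf : Fin (bufLen d ℓ) → α) (r : Fin d) (p : ℕ)
    (a : α) : 0 ≤ machineWeight G q buf r p a :=
  sum_nonneg fun _ _ => G.betProduct_nonneg _ _ _ _

omit [Fintype α] in
lemma oracle_shift (Z : ℕ → α) (c : ℕ) :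
    (fun u => oracle j Z (c + u)) = oracle j (fun i => Z (c * d + i)) := by
  funext u k
  simp only [oracle, prodSeq, AP]
  congr 1
  ring

omit [Fintype α] in
lemma AP_shift (Z : ℕ → α) (c : ℕ) :
    (fun u => AP Z d j.val (c + u)) = AP (fun i => Z (c * d + i)) d j.val := by
  funext u
  simp only [AP]
  congr 1
  ring

/-- Up to its committed step, `G` reads only symbols that are already known. -/
lemma committed_extend (n : ℕ) (z : Fin (bufLen d ℓ) → α) (a : α) :
    G.capital s (oracle j (extend X j.pos n z a)) (AP (extend X j.pos n z a) d j.val)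
        (committed d ℓ n) = G.capital s (oracle j X) (AP X d j.val) (committed d ℓ n) ∧
      G.state (oracle j (extend X j.pos n z a)) (AP (extend X j.pos n z a) d j.val)
        (committed d ℓ n) = G.state (oracle j X) (AP X d j.val) (committed d ℓ n) := by
  rcases committed_eq_zero_or (d := d) (ℓ := ℓ) n with h0 | hc
  · rw [h0]
    exact ⟨rfl, rfl⟩
  have hmul : (committed d ℓ n + (ℓ - 1)) * d ≤ n := hc ▸ Nat.div_mul_le_self n d
  have hY : ∀ u, u + 1 < committed d ℓ n + ℓ →
      oracle j (extend X j.pos n z a) u = oracle j X u := fun u hu =>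
    oracle_congr (B := committed d ℓ n + (ℓ - 1))
      (fun p hp _ => extend_of_lt X j.pos n z a (by omega)) (by omega)
  have hX : ∀ u < committed d ℓ n, AP (extend X j.pos n z a) d j.val u = AP X d j.val u := by
    intro u hu
    have : (u + 1) * d ≤ (committed d ℓ n + (ℓ - 1)) * d := Nat.mul_le_mul_right d (by omega)
    exact extend_of_lt X j.pos n z a (by rw [Nat.succ_mul] at this; have := j.isLt; omega)
  exact ⟨G.capital_congr s hY hX, G.state_congr hY hX⟩

lemma capital_extend_eq (n : ℕ) (z : Fin (bufLen d ℓ) → α) (a : α) :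
    G.capital s (oracle j (extend X j.pos n z a)) (AP (extend X j.pos n z a) d j.val)
        (apCount d j.val (n + 1)) =
      G.capital s (oracle j X) (AP X d j.val) (committed d ℓ n) *
        ((Fintype.card α : ℝ) ^ s) ^ pendingBets j.val (n % d) (pending d ℓ n) *
        G.betProduct (G.state (oracle j X) (AP X d j.val) (committed d ℓ n))
          (oracle j (localView (lastSymbols X (bufLen d ℓ) n) ⟨n % d, Nat.mod_lt n j.pos⟩
            (pending d ℓ n) z a))
          (AP (localView (lastSymbols X (bufLen d ℓ) n) ⟨n % d, Nat.mod_lt n j.pos⟩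
            (pending d ℓ n) z a) d j.val)
          (pendingBets j.val (n % d) (pending d ℓ n)) := by
  have hk := pendingBets_le (j := j) (ℓ := ℓ) n
  have hview := fun i => extend_eq_localView (j := j) X n z a (i := i)
  have hwin : (pending d ℓ n + ℓ) * d ≤ pending d ℓ n * d + bufLen d ℓ := by
    rw [bufLen, Nat.add_mul]
    have : ℓ * d ≤ (ℓ - 1) * d + d := by
      rw [← Nat.succ_mul]
      exact Nat.mul_le_mul_right d (by omega)
    omega
  rw [apCount_succ_eq_committed_add, G.capital_add, (committed_extend G X s n z a).1,
    (committed_extend G X s n z a).2, oracle_shift, AP_shift]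
  congr 2
  refine G.betProduct_congr _ (fun u hu => oracle_congr (B := pending d ℓ n + ℓ)
    (fun p hp _ => hview p (by omega)) (by omega)) fun u hu => hview _ ?_
  have : u * d ≤ pending d ℓ n * d := Nat.mul_le_mul_right d (by omega)
  have := j.isLt
  rw [bufLen]
  omega

lemma weight_eq (n : ℕ) (a : α) :
    weight G X s n a =
      G.capital s (oracle j X) (AP X d j.val) (committed d ℓ n) *
        ((Fintype.card α : ℝ) ^ s) ^ pendingBets j.val (n % d) (pending d ℓ n) *
        machineWeight G (G.state (oracle j X) (AP X d j.val) (committed d ℓ n))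
          (lastSymbols X (bufLen d ℓ) n) ⟨n % d, Nat.mod_lt n j.pos⟩ (pending d ℓ n) a := by
  rw [weight, machineWeight, Rat.cast_sum, mul_sum]
  exact sum_congr rfl fun z _ => capital_extend_eq G X s n z a

end Factorization

section Machine

variable {α : Type} [Fintype α] {d ℓ m : ℕ} {j : Fin d}
  (G : FSRG α ({k : Fin d // k ≠ j} → α) ℓ m) (X : ℕ → α)

/-- The state of `G` at its committed step, the buffer, the phase within the block and the
number of pending blocks. -/
abbrev SimState (α : Type) (d ℓ m : ℕ) : Type :=
  Fin (m + 1) × (Fin (bufLen d ℓ) → α) × Fin d × Fin (ℓ - 1 + 1)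

lemma add_mul_lt_bufLen {k τ : ℕ} (hk : k < d) (hτ : τ < ℓ) : k + τ * d < bufLen d ℓ := by
  have : τ * d ≤ (ℓ - 1) * d := Nat.mul_le_mul_right d (by omega)
  rw [bufLen]
  omega

/-- At the end of a block with `ℓ - 1` blocks pending the buffer holds the oracle window of
the next step of `G`, so that step is taken. -/
def simStep : SimState α d ℓ m → α → SimState α d ℓ m
  | (q, buf, r, p), a =>
    if hr : r.val + 1 < d then (q, shiftIn buf a, ⟨r + 1, hr⟩, p)
    else if hp : p.val < ℓ - 1 then (q, shiftIn buf a, ⟨0, r.pos⟩, ⟨p + 1, by omega⟩)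
    else
      (G.δ q (fun τ k => shiftIn buf a ⟨k.val + τ * d, add_mul_lt_bufLen k.val.isLt τ.isLt⟩)
        (shiftIn buf a ⟨j, j.isLt.trans_le (Nat.le_add_left d _)⟩),
        shiftIn buf a, ⟨0, r.pos⟩, p)

/-- The uniform bet when all weights vanish only serves to make the bets sum to `1`. -/
def simBet : SimState α d ℓ m → α → ℚ
  | (q, buf, r, p), a =>
    if ∑ b, machineWeight G q buf r p b = 0 then (Fintype.card α : ℚ)⁻¹
    else machineWeight G q buf r p a / ∑ b, machineWeight G q buf r p b

lemma simBet_nonneg (st : SimState α d ℓ m) (a : α) : 0 ≤ simBet G st a := by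
  obtain ⟨q, buf, r, p⟩ := st
  dsimp only [simBet]
  split_ifs
  · positivity
  · exact div_nonneg (machineWeight_nonneg G _ _ _ _ _)
      (sum_nonneg fun _ _ => machineWeight_nonneg G _ _ _ _ _)

lemma simBet_sum (hα : 0 < Fintype.card α) (st : SimState α d ℓ m) : ∑ a, simBet G st a = 1 := by
  obtain ⟨q, buf, r, p⟩ := st
  dsimp only [simBet]
  split_ifs with h
  · rw [sum_const, card_univ, nsmul_eq_mul]
    exact mul_inv_cancel₀ (by exact_mod_cast hα.ne')
  · rw [← sum_div, div_self h]

def simState (n : ℕ) : SimState α d ℓ m :=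
  (G.state (oracle j X) (AP X d j.val) (committed d ℓ n), lastSymbols X (bufLen d ℓ) n,
    ⟨n % d, Nat.mod_lt n j.pos⟩, ⟨pending d ℓ n, Nat.lt_succ_of_le (pending_le n)⟩)

end Machine

section Run

variable {α : Type} [Fintype α] {d ℓ m : ℕ} {j : Fin d}
  (G : FSRG α ({k : Fin d // k ≠ j} → α) ℓ m) (X : ℕ → α)

lemma pending_committed_succ_of_div_eq {n : ℕ} (h : (n + 1) / d = n / d) :
    pending d ℓ (n + 1) = pending d ℓ n ∧ committed d ℓ (n + 1) = committed d ℓ n := by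
  simp only [committed, pending, h, and_self]

lemma pending_committed_succ_of_lt {n : ℕ} (h : (n + 1) / d = n / d + 1)
    (hp : pending d ℓ n < ℓ - 1) :
    pending d ℓ (n + 1) = pending d ℓ n + 1 ∧ committed d ℓ (n + 1) = committed d ℓ n := by
  unfold committed pending at *
  rw [h]
  omega

lemma pending_committed_succ_of_not_lt {n : ℕ} (h : (n + 1) / d = n / d + 1)
    (hp : ¬ pending d ℓ n < ℓ - 1) :
    pending d ℓ (n + 1) = pending d ℓ n ∧ committed d ℓ (n + 1) = committed d ℓ n + 1 := by
  unfold committed pending at *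
  rw [h]
  omega

/-- When a step of `G` is taken, the buffer starts exactly at the block of that step. -/
lemma sub_bufLen_eq_committed_mul {n : ℕ} (h : (n + 1) / d = n / d + 1) (hmod : (n + 1) % d = 0)
    (hp : ¬ pending d ℓ n < ℓ - 1) :
    bufLen d ℓ ≤ n + 1 ∧ n + 1 - bufLen d ℓ = committed d ℓ n * d := by
  have hdm := Nat.div_add_mod' (n + 1) d
  have hc := committed_add_pending (d := d) (ℓ := ℓ) n
  have hpend : pending d ℓ n = ℓ - 1 := le_antisymm (pending_le n) (by omega)
  rw [hmod, h, add_zero] at hdm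
  rw [bufLen, ← hpend, ← hdm, ← hc, show (committed d ℓ n + pending d ℓ n + 1) * d =
    committed d ℓ n * d + (pending d ℓ n * d + d) by ring]
  omega

lemma simState_succ (n : ℕ) : simState G X (n + 1) = simStep G (simState G X n) (X n) := by
  simp only [simState, simStep, shiftIn_lastSymbols]
  rcases div_mod_succ j.pos n with ⟨hr, hdiv, hmod⟩ | ⟨hr, hdiv, hmod⟩
  · obtain ⟨hp, hc⟩ := pending_committed_succ_of_div_eq (ℓ := ℓ) hdiv
    simp only [dif_pos hr, hp, hc, hmod]
  · rw [dif_neg (by omega)]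
    by_cases hp : pending d ℓ n < ℓ - 1
    · obtain ⟨hp', hc⟩ := pending_committed_succ_of_lt hdiv hp
      simp only [dif_pos hp, hp', hc, hmod]
    · obtain ⟨hp', hc⟩ := pending_committed_succ_of_not_lt hdiv hp
      obtain ⟨hle, hsub⟩ := sub_bufLen_eq_committed_mul hdiv hmod hp
      simp only [dif_neg hp, hp', hc, hmod, FSRG.state, Prod.mk.injEq, and_true]
      congr 1
      · funext τ k
        rw [lastSymbols_apply X hle, hsub]
        simp only [oracle, prodSeq, AP]
        congr 1
        ring
      · rw [lastSymbols_apply X hle, hsub]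
        simp only [AP]
        congr 1
        ring

end Run

section Capital

variable {α : Type} [Fintype α] {d ℓ m : ℕ} {j : Fin d}
  (G : FSRG α ({k : Fin d // k ≠ j} → α) ℓ m) (X : ℕ → α) (s : ℝ)

lemma avgCapital_succ_eq_simBet_mul (n : ℕ) :
    avgCapital G X s (n + 1) = simBet G (simState G X n) (X n) * ∑ a, weight G X s n a := by
  simp only [avgCapital_succ, weight_eq, ← mul_sum, ← Rat.cast_sum]
  dsimp only [simState, simBet]
  set w := machineWeight G (G.state (oracle j X) (AP X d j.val) (committed d ℓ n))
    (lastSymbols X (bufLen d ℓ) n) ⟨n % d, Nat.mod_lt n j.pos⟩ (pending d ℓ n)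
  split_ifs with h
  · have hzero : w (X n) = 0 :=
      (sum_eq_zero_iff_of_nonneg fun b _ => machineWeight_nonneg G _ _ _ _ b).mp h _ (mem_univ _)
    simp [h, hzero]
  · have hS : ((∑ b, w b : ℚ) : ℝ) ≠ 0 := by exact_mod_cast h
    rw [Rat.cast_div]
    field_simp

lemma avgCapital_succ_eq (n : ℕ) :
    avgCapital G X s (n + 1) = simBet G (simState G X n) (X n) *
      ((Fintype.card α : ℝ) ^ (if n % d = j.val then s else 1) * avgCapital G X s n) := by
  rw [avgCapital_succ_eq_simBet_mul, sum_weight]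

noncomputable def simGambler (hα : 0 < Fintype.card α) :
    FSG α (Fintype.card (SimState α d ℓ m) - 1) :=
  FSG.ofFintype (simStep G) (simBet G) (simBet_nonneg G) (simBet_sum G hα) (simState G X 0)

lemma simGambler_capital_succ (hα : 0 < Fintype.card α) (t : ℝ) (n : ℕ) :
    (simGambler G X hα).capital t X (n + 1) =
      (Fintype.card α : ℝ) ^ t * simBet G (simState G X n) (X n) *
        (simGambler G X hα).capital t X n :=
  FSG.ofFintype_capital_succ _ _ _ _ _ t X (simState G X) rfl (simState_succ G X) n

/-- With `t = ((d - 1) + s) / d` the exponent is `(s - 1) j / d` along `A_{d,j}`, so the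
gambler's capital there is a constant multiple of the averaged capital. -/
lemma simGambler_capital_mul (hα : 0 < Fintype.card α) (t : ℝ) (n : ℕ) :
    (simGambler G X hα).capital t X n * (Fintype.card α : ℝ) ^ bufLen d ℓ =
      (Fintype.card α : ℝ) ^ ((t - 1) * n + (1 - s) * apCount d j.val n) *
        avgCapital G X s n := by
  have hκ : (0 : ℝ) < Fintype.card α := by exact_mod_cast hα
  induction n with
  | zero => simp [FSG.capital, avgCapital_zero, apCount_zero]
  | succ n ih =>
    rw [simGambler_capital_succ, avgCapital_succ_eq, mul_assoc, ih, apCount_succ j.isLt]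
    have hexp : (t - 1) * ((n + 1 : ℕ) : ℝ) + (1 - s) * ((apCount d j.val n +
        if n % d = j.val then 1 else 0 : ℕ) : ℝ) + (if n % d = j.val then s else 1) =
        t + ((t - 1) * n + (1 - s) * apCount d j.val n) := by
      split_ifs <;> push_cast <;> ring
    have hpow : (Fintype.card α : ℝ) ^ ((t - 1) * ((n + 1 : ℕ) : ℝ) + (1 - s) *
        ((apCount d j.val n + if n % d = j.val then 1 else 0 : ℕ) : ℝ)) *
        (Fintype.card α : ℝ) ^ (if n % d = j.val then s else 1) = (Fintype.card α : ℝ) ^ t *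
        (Fintype.card α : ℝ) ^ ((t - 1) * n + (1 - s) * apCount d j.val n) := by
      rw [← Real.rpow_add hκ, ← Real.rpow_add hκ, hexp]
    linear_combination -(simBet G (simState G X n) (X n) * avgCapital G X s n : ℝ) * hpow

end Capital

lemma dimFS_le_of_FSRG_succeeds {α : Type} [Fintype α] {X : ℕ → α} {d ℓ m : ℕ} {j : Fin d}
    {G : FSRG α ({k : Fin d // k ≠ j} → α) ℓ m} {s : ℝ} (hs : 0 ≤ s)
    (hG : G.Succeeds s (prodSeq fun k : {k : Fin d // k ≠ j} => AP X d k.val) (AP X d j.val)) :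
    dimFS X ≤ ((d : ℝ) - 1 + s) / d := by
  have hα : 0 < Fintype.card α := Fintype.card_pos_iff.mpr ⟨X 0⟩
  have hκ : (0 : ℝ) < Fintype.card α := by exact_mod_cast hα
  have hd : (1 : ℝ) ≤ d := by exact_mod_cast j.pos
  set t := ((d : ℝ) - 1 + s) / d with ht
  set c := (Fintype.card α : ℝ) ^ ((s - 1) * j.val / d)
  have hc : 0 < c := Real.rpow_pos_of_pos hκ _
  have hE : 0 < (Fintype.card α : ℝ) ^ bufLen d ℓ := pow_pos hκ _
  refine dimFS_le_of_succeeds (by positivity) (G := simGambler G X hα) fun C => ?_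
  obtain ⟨k, hk⟩ := hG (C * (Fintype.card α : ℝ) ^ bufLen d ℓ / c)
  refine ⟨j.val + k * d, (mul_lt_mul_iff_left₀ hE).mp ?_⟩
  have hexp : (t - 1) * ((j.val + k * d : ℕ) : ℝ) + (1 - s) * (apCount d j.val (j.val + k * d) : ℕ)
      = (s - 1) * j.val / d := by
    rw [apCount_add_mul j.isLt, ht]
    push_cast
    field_simp
    ring
  calc C * (Fintype.card α : ℝ) ^ bufLen d ℓ
      < c * G.capital s (oracle j X) (AP X d j.val) k := by rwa [div_lt_iff₀' hc] at hk
    _ ≤ c * avgCapital G X s (j.val + k * d) := by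
      have := capital_le_avgCapital G X s (j.val + k * d)
      rw [apCount_add_mul j.isLt] at this
      exact mul_le_mul_of_nonneg_left this hc.le
    _ = _ := by rw [simGambler_capital_mul G X s hα t, hexp]

end APSimulation

theorem AP_relative_dim_lower_bound_of_dimFS_ge_general {α : Type} [Fintype α]
    (hα : 2 ≤ Fintype.card α) (X : ℕ → α) (d : ℕ) (j : Fin d)
    (ε : ℝ)
    (hX : ((d : ℝ) - 1) / d + ε ≤ dimFS X) :
    dimFSRelFam (AP X d j.val) (fun k : {k : Fin d // k ≠ j} => AP X d (k : Fin d).val)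
        ≤ dimFS (AP X d j.val) ∧
    (d : ℝ) * ε ≤
      dimFSRelFam (AP X d j.val)
        (fun k : {k : Fin d // k ≠ j} => AP X d (k : Fin d).val) := by
  refine ⟨dimFSRel_le_dimFS hα _ _, le_dimFSRel hα fun s ℓ m G hs hG => ?_⟩
  have hdim := hX.trans (APSimulation.dimFS_le_of_FSRG_succeeds hs hG)
  have hd : (0 : ℝ) < d := by exact_mod_cast j.pos
  rw [add_div, add_le_add_iff_left, le_div_iff₀ hd] at hdim
  linarith

/-- if `dim_FS(X) ≥ (d−1)/d + ε` then
`dim_FS(A_{d,j}) ≥ dim_FS^{{A_{d,k} : k ≠ j}}(A_{d,j}) ≥ d·ε`. -/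
theorem AP_relative_dim_lower_bound_of_dimFS_ge {α : Type} [Fintype α]
    (hα : 2 ≤ Fintype.card α) (X : ℕ → α) (d : ℕ) (hd : 0 < d) (j : Fin d)
    (ε : ℝ) (hε : 0 < ε)
    (hX : ((d : ℝ) - 1) / d + ε ≤ dimFS X) :
    dimFSRelFam (AP X d j.val) (fun k : {k : Fin d // k ≠ j} => AP X d (k : Fin d).val)
        ≤ dimFS (AP X d j.val) ∧
    (d : ℝ) * ε ≤
      dimFSRelFam (AP X d j.val)
        (fun k : {k : Fin d // k ≠ j} => AP X d (k : Fin d).val) :=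
  AP_relative_dim_lower_bound_of_dimFS_ge_general hα X d j ε hX
end

section
/- Let X be an infinite sequence over a finite alphabet Σ with |Σ| ≥ 2. If for every d ≥ 2 and every a ∈ {0,1,…,d−1}, dim_FS^{{A_{d,k} : k ≠ a}}(A_{d,a}) = 1, then dim_FS(X) = 1, i.e., X is normal. -/
open Filter

section Aux

variable {α : Type} [Fintype α] {m : ℕ}

lemma FSG.bet_le_one (G : FSG α m) (q : Fin (m+1)) (a : α) : G.bet q a ≤ 1 := by
  have h := G.bet_sum q
  calc G.bet q a ≤ ∑ b, G.bet q b :=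
        Finset.single_le_sum (fun i _ => G.bet_nonneg q i) (Finset.mem_univ a)
    _ = 1 := h

lemma FSG.capital_nonneg (G : FSG α m) (s : ℝ) (X : ℕ → α) (n : ℕ) :
    0 ≤ G.capital s X n := by
  induction n with
  | zero => norm_num [FSG.capital]
  | succ n ih =>
    have h1 : (0:ℝ) ≤ (Fintype.card α : ℝ) ^ s := Real.rpow_nonneg (by positivity) s
    have h2 : (0:ℝ) ≤ (G.bet (G.state X n) (X n) : ℝ) := by exact_mod_cast G.bet_nonneg _ _
    simpa [FSG.capital] using mul_nonneg (mul_nonneg h1 h2) ih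

lemma FSG.capital_eq (G : FSG α m) (s : ℝ) (X : ℕ → α) (n : ℕ) :
    G.capital s X n = ((Fintype.card α : ℝ) ^ s) ^ n *
      ∏ i ∈ Finset.range n, (G.bet (G.state X i) (X i) : ℝ) := by
  induction n with
  | zero => simp [FSG.capital]
  | succ n ih =>
    rw [FSG.capital, ih, Finset.prod_range_succ, pow_succ]
    ring

lemma prod_range_two_mul (f : ℕ → ℝ) (n : ℕ) :
    ∏ i ∈ Finset.range (2*n), f i =
      (∏ i ∈ Finset.range n, f (2*i)) * ∏ i ∈ Finset.range n, f (2*i+1) := by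
  induction n with
  | zero => simp
  | succ n ih =>
    have h2 : 2 * (n+1) = (2*n+1)+1 := by ring
    rw [h2, Finset.prod_range_succ, Finset.prod_range_succ, Finset.prod_range_succ,
      Finset.prod_range_succ, ih]
    ring

/-- Relative gambler simulating `G` on the even-indexed subsequence. -/
def evenSim (G : FSG α m) : FSRG α ({k : Fin 2 // k ≠ (0:Fin 2)} → α) 1 m where
  δ := fun q y x => G.δ (G.δ q x) (y 0 ⟨1, by decide⟩)
  bet := fun q _ x => G.bet q x
  bet_nonneg := fun q _ a => G.bet_nonneg q a
  bet_sum := fun q _ => G.bet_sum q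
  q₀ := G.q₀

/-- Relative gambler simulating `G` on the odd-indexed subsequence. -/
def oddSim (G : FSG α m) : FSRG α ({k : Fin 2 // k ≠ (1:Fin 2)} → α) 1 m where
  δ := fun q y x => G.δ (G.δ q (y 0 ⟨0, by decide⟩)) x
  bet := fun q y x => G.bet (G.δ q (y 0 ⟨0, by decide⟩)) x
  bet_nonneg := fun q y a => G.bet_nonneg _ a
  bet_sum := fun q y => G.bet_sum _
  q₀ := G.q₀

lemma AP_zero_2 (X : ℕ → α) (i : ℕ) : AP X 2 (0:Fin 2).val i = X (2*i) := by
  simp only [AP, Fin.val_zero]; congr 1; omega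

lemma AP_one_2 (X : ℕ → α) (i : ℕ) : AP X 2 (1:Fin 2).val i = X (2*i+1) := by
  simp only [AP, Fin.val_one]; congr 1; omega

lemma evenSim_state (G : FSG α m) (X : ℕ → α) (n : ℕ) :
    (evenSim G).state (prodSeq fun k : {k : Fin 2 // k ≠ (0:Fin 2)} => AP X 2 (k : Fin 2).val)
      (AP X 2 (0:Fin 2).val) n = G.state X (2*n) := by
  induction n with
  | zero => rfl
  | succ n ih =>
    have h2 : 2 * (n+1) = (2*n+1)+1 := by ring
    rw [h2]
    show (evenSim G).δ _ _ _ = _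
    rw [ih]
    simp only [evenSim, prodSeq, FSG.state]
    rw [AP_zero_2]
    have : AP X 2 ((⟨1, by decide⟩ : {k : Fin 2 // k ≠ (0:Fin 2)}) : Fin 2).val
        (n + (0:Fin 1).val) = X (2*n+1) := by
      simp only [AP, Fin.val_one]; congr 1; omega
    rw [this]

lemma oddSim_state (G : FSG α m) (X : ℕ → α) (n : ℕ) :
    (oddSim G).state (prodSeq fun k : {k : Fin 2 // k ≠ (1:Fin 2)} => AP X 2 (k : Fin 2).val)
      (AP X 2 (1:Fin 2).val) n = G.state X (2*n) := by
  induction n with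
  | zero => rfl
  | succ n ih =>
    have h2 : 2 * (n+1) = (2*n+1)+1 := by ring
    rw [h2]
    show (oddSim G).δ _ _ _ = _
    rw [ih]
    simp only [oddSim, prodSeq, FSG.state]
    rw [AP_one_2]
    have : AP X 2 ((⟨0, by decide⟩ : {k : Fin 2 // k ≠ (1:Fin 2)}) : Fin 2).val
        (n + (0:Fin 1).val) = X (2*n) := by
      simp only [AP, Fin.val_zero]; congr 1; omega
    rw [this]

lemma evenSim_capital (G : FSG α m) (X : ℕ → α) (t : ℝ) (n : ℕ) :
    (evenSim G).capital t
      (prodSeq fun k : {k : Fin 2 // k ≠ (0:Fin 2)} => AP X 2 (k : Fin 2).val)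
      (AP X 2 (0:Fin 2).val) n =
    ((Fintype.card α : ℝ) ^ t) ^ n *
      ∏ i ∈ Finset.range n, (G.bet (G.state X (2*i)) (X (2*i)) : ℝ) := by
  induction n with
  | zero => simp [FSRG.capital]
  | succ n ih =>
    rw [FSRG.capital, ih, evenSim_state, Finset.prod_range_succ, pow_succ, AP_zero_2]
    show (Fintype.card α : ℝ) ^ t * ((G.bet (G.state X (2*n)) (X (2*n)) : ℝ)) * _ = _
    ring

lemma oddSim_capital (G : FSG α m) (X : ℕ → α) (t : ℝ) (n : ℕ) :
    (oddSim G).capital t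
      (prodSeq fun k : {k : Fin 2 // k ≠ (1:Fin 2)} => AP X 2 (k : Fin 2).val)
      (AP X 2 (1:Fin 2).val) n =
    ((Fintype.card α : ℝ) ^ t) ^ n *
      ∏ i ∈ Finset.range n, (G.bet (G.state X (2*i+1)) (X (2*i+1)) : ℝ) := by
  induction n with
  | zero => simp [FSRG.capital]
  | succ n ih =>
    rw [FSRG.capital, ih, oddSim_state, Finset.prod_range_succ, pow_succ, AP_one_2]
    have hb : ((oddSim G).bet (G.state X (2*n))
        (fun j : Fin 1 => (prodSeq fun k : {k : Fin 2 // k ≠ (1:Fin 2)} =>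
          AP X 2 (k : Fin 2).val) (n + j.val)) (X (2*n+1)) : ℝ)
        = (G.bet (G.state X (2*n+1)) (X (2*n+1)) : ℝ) := by
      simp only [oddSim, prodSeq]
      have : AP X 2 ((⟨0, by decide⟩ : {k : Fin 2 // k ≠ (1:Fin 2)}) : Fin 2).val
          (n + (0:Fin 1).val) = X (2*n) := by
        simp only [AP, Fin.val_zero]; congr 1; omega
      rw [this]
      rfl
    rw [hb]
    ring

end Aux
/-- The uniform one-state gambler. -/
def unifG {α : Type} [Fintype α] (h0 : Fintype.card α ≠ 0) : FSG α 0 where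
  δ := fun _ _ => 0
  bet := fun _ _ => (Fintype.card α : ℚ)⁻¹
  bet_nonneg := fun _ _ => by positivity
  bet_sum := fun _ => by
    rw [Finset.sum_const, Finset.card_univ, nsmul_eq_mul]
    field_simp
  q₀ := 0

lemma unifG_capital {α : Type} [Fintype α] (h0 : Fintype.card α ≠ 0) (s : ℝ) (X : ℕ → α)
    (n : ℕ) : (unifG h0).capital s X n = ((Fintype.card α : ℝ) ^ s / Fintype.card α) ^ n := by
  induction n with
  | zero => simp [FSG.capital]
  | succ n ih =>
    rw [FSG.capital, ih, pow_succ]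
    show (Fintype.card α : ℝ) ^ s * (((Fintype.card α : ℚ)⁻¹ : ℚ) : ℝ) * _ = _
    push_cast
    ring

lemma unifG_succeeds {α : Type} [Fintype α] (hα : 2 ≤ Fintype.card α) (s : ℝ) (hs : 1 < s)
    (X : ℕ → α) : (unifG (by omega : Fintype.card α ≠ 0)).Succeeds s X := by
  intro C
  have hcard : (1:ℝ) < (Fintype.card α : ℝ) := by exact_mod_cast hα.trans_lt' one_lt_two
  have hr : (1:ℝ) < (Fintype.card α : ℝ) ^ s / Fintype.card α := by
    rw [lt_div_iff₀ (by linarith), one_mul]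
    calc (Fintype.card α : ℝ) = (Fintype.card α : ℝ) ^ (1:ℝ) := (Real.rpow_one _).symm
      _ < (Fintype.card α : ℝ) ^ s := Real.rpow_lt_rpow_left_iff hcard |>.mpr hs
  obtain ⟨n, hn⟩ := pow_unbounded_of_one_lt C hr
  exact ⟨n, by rw [unifG_capital]; exact hn⟩

/-- perfect converse: if every A.P. subsequence of `X` with common difference
`d ≥ 2` is relatively normal given the other A.P. subsequences with the same common
difference, then `X` is normal (`dim_FS(X) = 1`). -/
theorem wall_converse_relative {α : Type} [Fintype α] (hα : 2 ≤ Fintype.card α)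
    (X : ℕ → α)
    (h : ∀ d : ℕ, 2 ≤ d → ∀ a : Fin d,
      dimFSRelFam (AP X d a.val)
        (fun k : {k : Fin d // k ≠ a} => AP X d (k : Fin d).val) = 1) :
    dimFS X = 1 := by
  have hcard0 : Fintype.card α ≠ 0 := by omega
  have hcard1 : (1:ℝ) ≤ (Fintype.card α : ℝ) := by exact_mod_cast Nat.one_le_of_lt hα
  set S : Set ℝ := {s : ℝ | 0 ≤ s ∧ ∃ (m : ℕ) (G : FSG α m), G.Succeeds s X} with hS
  have hSne : (2:ℝ) ∈ S := ⟨by norm_num, 0, unifG hcard0, unifG_succeeds hα 2 one_lt_two X⟩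
  have hSbdd : BddBelow S := ⟨0, fun x hx => hx.1⟩
  -- lower bound: every s ∈ S satisfies 1 ≤ s
  have hlow : ∀ s ∈ S, (1:ℝ) ≤ s := by
    rintro s ⟨hs0, m, G, hG⟩
    by_contra hs1
    push_neg at hs1
    set t : ℝ := (1 + s) / 2 with ht
    have ht0 : 0 ≤ t := by simp only [ht]; linarith
    have hst : s < t := by simp only [ht]; linarith
    have ht1 : t < 1 := by simp only [ht]; linarith
    -- abbreviations
    set E : ℕ → ℝ := fun n => ∏ i ∈ Finset.range n, (G.bet (G.state X (2*i)) (X (2*i)) : ℝ)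
      with hE
    set O : ℕ → ℝ := fun n => ∏ i ∈ Finset.range n, (G.bet (G.state X (2*i+1)) (X (2*i+1)) : ℝ)
      with hO
    have hEnn : ∀ n, 0 ≤ E n := fun n => Finset.prod_nonneg fun i _ => by
      exact_mod_cast G.bet_nonneg _ _
    have hOnn : ∀ n, 0 ≤ O n := fun n => Finset.prod_nonneg fun i _ => by
      exact_mod_cast G.bet_nonneg _ _
    -- the key claim: one of the two simulating relative gamblers succeeds at t
    have hkey : ((evenSim G).Succeeds t
          (prodSeq fun k : {k : Fin 2 // k ≠ (0:Fin 2)} => AP X 2 (k : Fin 2).val)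
          (AP X 2 (0:Fin 2).val)) ∨
        ((oddSim G).Succeeds t
          (prodSeq fun k : {k : Fin 2 // k ≠ (1:Fin 2)} => AP X 2 (k : Fin 2).val)
          (AP X 2 (1:Fin 2).val)) := by
      by_contra hcon
      push_neg at hcon
      obtain ⟨hc0, hc1⟩ := hcon
      simp only [FSRG.Succeeds, not_forall, not_exists, not_lt] at hc0 hc1
      obtain ⟨C₀, hC₀⟩ := hc0
      obtain ⟨C₁, hC₁⟩ := hc1
      -- bounds in terms of E and O
      have hE' : ∀ n, ((Fintype.card α : ℝ) ^ t) ^ n * E n ≤ C₀ := fun n => by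
        have := hC₀ n; rwa [evenSim_capital] at this
      have hO' : ∀ n, ((Fintype.card α : ℝ) ^ t) ^ n * O n ≤ C₁ := fun n => by
        have := hC₁ n; rwa [oddSim_capital] at this
      have hrt : (0:ℝ) < (Fintype.card α : ℝ) ^ t := Real.rpow_pos_of_pos (by linarith) t
      have hrs1 : (1:ℝ) ≤ (Fintype.card α : ℝ) ^ s := Real.one_le_rpow hcard1 hs0
      have hst' : (Fintype.card α : ℝ) ^ s ≤ (Fintype.card α : ℝ) ^ t :=
        Real.rpow_le_rpow_of_exponent_le hcard1 hst.le
      -- G's capital at even times is bounded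
      have heven : ∀ n, G.capital s X (2*n) ≤ C₀ * C₁ := by
        intro n
        rw [FSG.capital_eq, prod_range_two_mul]
        have h1 : ((Fintype.card α : ℝ) ^ s) ^ (2*n) * (E n * O n)
            ≤ ((Fintype.card α : ℝ) ^ t) ^ (2*n) * (E n * O n) := by
          apply mul_le_mul_of_nonneg_right _ (mul_nonneg (hEnn n) (hOnn n))
          exact pow_le_pow_left₀ (Real.rpow_nonneg (by linarith) s) hst' _
        have h2 : ((Fintype.card α : ℝ) ^ t) ^ (2*n) * (E n * O n)
            = (((Fintype.card α : ℝ) ^ t) ^ n * E n) * (((Fintype.card α : ℝ) ^ t) ^ n * O n) := by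
          rw [two_mul, pow_add]; ring
        calc ((Fintype.card α : ℝ) ^ s) ^ (2*n) * (E n * O n)
            ≤ (((Fintype.card α : ℝ) ^ t) ^ n * E n) * (((Fintype.card α : ℝ) ^ t) ^ n * O n) :=
              by rw [← h2]; exact h1
          _ ≤ C₀ * C₁ := by
              apply mul_le_mul (hE' n) (hO' n) (mul_nonneg (by positivity) (hOnn n))
              exact le_trans (mul_nonneg (by positivity) (hEnn n)) (hE' n)
      -- hence G's capital is bounded everywhere
      have hall : ∀ N, G.capital s X N ≤ (Fintype.card α : ℝ) ^ s * (C₀ * C₁) := by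
        intro N
        rcases Nat.even_or_odd N with ⟨n, hn⟩ | ⟨n, hn⟩
        · have : N = 2*n := by omega
          rw [this]
          calc G.capital s X (2*n) ≤ C₀ * C₁ := heven n
            _ = 1 * (C₀ * C₁) := (one_mul _).symm
            _ ≤ (Fintype.card α : ℝ) ^ s * (C₀ * C₁) := by
                apply mul_le_mul_of_nonneg_right hrs1
                have h00 := heven 0
                simp only [Nat.mul_zero] at h00
                have : (1:ℝ) ≤ C₀ * C₁ := by
                  have : G.capital s X 0 = 1 := rfl
                  linarith [heven 0, this ▸ heven 0]
                linarith
        · have hN : N = 2*n + 1 := by omega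
          rw [hN, FSG.capital]
          have hb1 : (G.bet (G.state X (2*n)) (X (2*n)) : ℝ) ≤ 1 := by
            exact_mod_cast G.bet_le_one _ _
          have hb0 : (0:ℝ) ≤ (G.bet (G.state X (2*n)) (X (2*n)) : ℝ) := by
            exact_mod_cast G.bet_nonneg _ _
          calc (Fintype.card α : ℝ) ^ s * (G.bet (G.state X (2*n)) (X (2*n)) : ℝ) *
                G.capital s X (2*n)
              ≤ (Fintype.card α : ℝ) ^ s * 1 * (C₀ * C₁) := by
                apply mul_le_mul
                · exact mul_le_mul_of_nonneg_left hb1 (by positivity)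
                · exact heven n
                · exact G.capital_nonneg s X _
                · positivity
            _ = (Fintype.card α : ℝ) ^ s * (C₀ * C₁) := by ring
        -- contradiction with success of G
      obtain ⟨N, hNlt⟩ := hG ((Fintype.card α : ℝ) ^ s * (C₀ * C₁))
      exact absurd (hall N) (not_le.mpr hNlt)
    -- derive contradiction with h in either case
    rcases hkey with hk | hk
    · have h2 := h 2 le_rfl 0
      have hmem : t ∈ {s' : ℝ | 0 ≤ s' ∧ ∃ (ℓ m' : ℕ)
          (G' : FSRG α ({k : Fin 2 // k ≠ (0:Fin 2)} → α) ℓ m'), G'.Succeeds s'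
            (prodSeq fun k : {k : Fin 2 // k ≠ (0:Fin 2)} => AP X 2 (k : Fin 2).val)
            (AP X 2 (0:Fin 2).val)} := ⟨ht0, 1, m, evenSim G, hk⟩
      have hle : dimFSRelFam (AP X 2 (0:Fin 2).val)
          (fun k : {k : Fin 2 // k ≠ (0:Fin 2)} => AP X 2 (k : Fin 2).val) ≤ t :=
        csInf_le ⟨0, fun x hx => hx.1⟩ hmem
      rw [h2] at hle
      linarith
    · have h2 := h 2 le_rfl 1
      have hmem : t ∈ {s' : ℝ | 0 ≤ s' ∧ ∃ (ℓ m' : ℕ)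
          (G' : FSRG α ({k : Fin 2 // k ≠ (1:Fin 2)} → α) ℓ m'), G'.Succeeds s'
            (prodSeq fun k : {k : Fin 2 // k ≠ (1:Fin 2)} => AP X 2 (k : Fin 2).val)
            (AP X 2 (1:Fin 2).val)} := ⟨ht0, 1, m, oddSim G, hk⟩
      have hle : dimFSRelFam (AP X 2 (1:Fin 2).val)
          (fun k : {k : Fin 2 // k ≠ (1:Fin 2)} => AP X 2 (k : Fin 2).val) ≤ t :=
        csInf_le ⟨0, fun x hx => hx.1⟩ hmem
      rw [h2] at hle
      linarith
  -- now conclude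
  have hub : dimFS X ≤ 1 := by
    have hsub : Set.Ioi (1:ℝ) ⊆ S := by
      intro s hs
      exact ⟨by linarith [Set.mem_Ioi.mp hs], 0, unifG hcard0,
        unifG_succeeds hα s (Set.mem_Ioi.mp hs) X⟩
    calc dimFS X = sInf S := rfl
      _ ≤ sInf (Set.Ioi (1:ℝ)) := csInf_le_csInf hSbdd Set.nonempty_Ioi hsub
      _ = 1 := csInf_Ioi
  have hlb : (1:ℝ) ≤ dimFS X := le_csInf ⟨2, hSne⟩ hlow
  linarith
end
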